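/- Fix d ≥ 3, σ > 0, w, z ∈ ℝ, ε > 0 and c > 0. Define b_N := σ·[√(2 log N) − (log log N + log(4π))/(2√(2 log N))], a_N := σ²/b_N, u_N(x) := a_N x + b_N, and let Φ̄(t) := P(𝒩(0,1) > t) be the standard Gaussian upper tail. Suppose (σ_N) and (m_N) are sequences of reals with 0 < σ_N ≤ σ, σ² − σ_N² ≤ c·(log N)^{−2(1+ε)(d−2)} and |m_N| ≤ u_N(z)^{−1−ε}. Then N·| Φ̄(u_N(w)/σ) − Φ̄((u_N(w) − m_N)/σ_N) | → 0 as N → ∞. -/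

import Mathlib

open MeasureTheory ProbabilityTheory Real Filter Set

/-- `ℤ^d` as functions `Fin d → ℤ`. -/
abbrev Zd (d : ℕ) := Fin d → ℤ

/-- One step of the simple random walk: move from `a` by `±1` in coordinate `i`. -/
def rwStep (d : ℕ) (i : Fin d) (s : Bool) (a : Zd d) : Zd d :=
  Function.update a i (a i + if s then 1 else -1)

/-- `m`-step transition probability of the simple random walk on `ℤ^d`. -/
noncomputable def rwP (d : ℕ) : ℕ → Zd d → Zd d → ℝ
  | 0, a, b => if a = b then 1 else 0
  | (m+1), a, b => (1 / (2 * d)) * ∑ i : Fin d, ∑ s : Bool, rwP d m (rwStep d i s a) b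

/-- The Green's function `g(a,b)` of the simple random walk on `ℤ^d`. -/
noncomputable def green (d : ℕ) (a b : Zd d) : ℝ := ∑' m, rwP d m a b

open Classical in
/-- Probability that the walk started at `a` is at `b` at time `m`, having stayed in `Λ`
at all times `0,…,m`. -/
noncomputable def rwPIn (d : ℕ) (Λ : Set (Zd d)) : ℕ → Zd d → Zd d → ℝ
  | 0, a, b => if a = b ∧ a ∈ Λ then 1 else 0
  | (m+1), a, b =>
      if a ∈ Λ then (1 / (2 * d)) * ∑ i : Fin d, ∑ s : Bool, rwPIn d Λ m (rwStep d i s a) b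
      else 0

/-- Dirichlet Green's function `g_Λ(a,b)` (killed upon exiting `Λ`). -/
noncomputable def greenIn (d : ℕ) (Λ : Set (Zd d)) (a b : Zd d) : ℝ := ∑' m, rwPIn d Λ m a b

open Classical in
/-- Probability that the walk started at `a` first hits `F` at time `m`, at the point `b`. -/
noncomputable def hitP (d : ℕ) (F : Set (Zd d)) : ℕ → Zd d → Zd d → ℝ
  | 0, a, b => if a = b ∧ b ∈ F then 1 else 0
  | (m+1), a, b =>
      if a ∈ F then 0
      else (1 / (2 * d)) * ∑ i : Fin d, ∑ s : Bool, hitP d F m (rwStep d i s a) b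

open Classical in
/-- Probability that the walk started at `a` first hits `F` at time `m`, at the point `b`,
before exiting `Λ`. -/
noncomputable def hitPIn (d : ℕ) (Λ F : Set (Zd d)) : ℕ → Zd d → Zd d → ℝ
  | 0, a, b => if a = b ∧ b ∈ F ∧ b ∈ Λ then 1 else 0
  | (m+1), a, b =>
      if a ∈ Λ ∧ a ∉ F then
        (1 / (2 * d)) * ∑ i : Fin d, ∑ s : Bool, hitPIn d Λ F m (rwStep d i s a) b
      else 0

/-- `ℙ_a(H_F < ∞, S_{H_F} = b)`, the harmonic measure of `F` seen from `a`. -/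
noncomputable def hitMeas (d : ℕ) (F : Set (Zd d)) (a b : Zd d) : ℝ := ∑' m, hitP d F m a b

/-- `ℙ_a(H_F < H_{ℤ^d∖Λ}, S_{H_F} = b)`. -/
noncomputable def hitMeasIn (d : ℕ) (Λ F : Set (Zd d)) (a b : Zd d) : ℝ :=
  ∑' m, hitPIn d Λ F m a b

/-- `(φ_a)_{a∈ℤ^d}` is a centered Gaussian field with covariance `G`: every finite linear
combination is a centered Gaussian with the prescribed variance. -/
def IsGaussianField {Ω : Type*} [MeasurableSpace Ω] (P : Measure Ω) (d : ℕ)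
    (G : Zd d → Zd d → ℝ) (φ : Zd d → Ω → ℝ) : Prop :=
  (∀ a, Measurable (φ a)) ∧
    ∀ c : Zd d →₀ ℝ,
      Measure.map (fun ω => ∑ a ∈ c.support, c a * φ a ω) P =
        gaussianReal 0
          (Real.toNNReal (∑ a ∈ c.support, ∑ b ∈ c.support, c a * c b * G a b))

/-- The centering sequence `b_N` (here `g0 = g(0)` is the variance of the field). -/
noncomputable def bN (g0 : ℝ) (N : ℕ) : ℝ :=
  Real.sqrt g0 * (Real.sqrt (2 * Real.log N) -
    (Real.log (Real.log N) + Real.log (4 * π)) / (2 * Real.sqrt (2 * Real.log N)))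

/-- The scaling sequence `a_N = g(0)/b_N`. -/
noncomputable def aN (g0 : ℝ) (N : ℕ) : ℝ := g0 / bN g0 N

/-- `u_N(z) = a_N z + b_N`. -/
noncomputable def uN (g0 : ℝ) (N : ℕ) (z : ℝ) : ℝ := aN g0 N * z + bN g0 N

/-- The box `V_N = ([0,n-1]^d) ∩ ℤ^d`, `N = n^d`. -/
noncomputable def VN (d n : ℕ) : Finset (Zd d) :=
  Fintype.piFinset fun _ => Finset.Icc (0 : ℤ) ((n : ℤ) - 1)

/-- The `ℓ∞` distance between two points of `ℤ^d`, as a real number. -/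
noncomputable def distInf (d : ℕ) (a b : Zd d) : ℝ :=
  ((Finset.univ.sup fun i => (a i - b i).natAbs : ℕ) : ℝ)

open Classical in
/-- The bulk `V_N^δ` of the box `V_N`. -/
noncomputable def bulk (d n : ℕ) (δ : ℝ) : Finset (Zd d) :=
  (VN d n).filter fun a => ∀ b : Zd d, b ∉ VN d n → δ * n < distInf d a b

/-- The rectangle `∏_i ([0,1] ∩ (lo i, hi i])` in `[0,1]^d`. -/
def rect (d : ℕ) (lo hi : Fin d → ℝ) : Set (Fin d → ℝ) :=
  {t | ∀ i, t i ∈ Set.Icc (0 : ℝ) 1 ∩ Set.Ioc (lo i) (hi i)}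

open Classical in
/-- `nA ∩ V_N = {α ∈ V_N : α/n ∈ A}` for the rectangle `A = rect d lo hi`. -/
noncomputable def rectIdx (d n : ℕ) (lo hi : Fin d → ℝ) : Finset (Zd d) :=
  (VN d n).filter fun a => (fun i => (a i : ℝ) / n) ∈ rect d lo hi

/-- `e^{-y}` for `y ∈ (-∞,+∞]`, with the convention `e^{-∞} = 0`. -/
noncomputable def expE (y : EReal) : ℝ := if y = ⊤ then 0 else Real.exp (-y.toReal)

/-- `u_N` extended to `(-∞,+∞]` by `u_N(+∞) = +∞`. -/
noncomputable def uNE (g0 : ℝ) (N : ℕ) (y : EReal) : EReal :=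
  if y = ⊤ then ⊤ else ((uN g0 N y.toReal : ℝ) : EReal)

/-- `ω(R) = ∫_R e^{-z} dz` for `R ⊆ (-∞,+∞]`. -/
noncomputable def omegaMeas (R : Set EReal) : ℝ :=
  ∫ t in {t : ℝ | (t : EReal) ∈ R}, Real.exp (-t)

/-- `R ⊆ (-∞,+∞]` is a finite union of disjoint intervals `(x,y]` with
`-∞ < x < y ≤ +∞`. -/
def IsFiniteUnionIoc (R : Set EReal) : Prop :=
  ∃ (m : ℕ) (w : Fin m → ℝ) (r : Fin m → EReal),
    (∀ l, (w l : EReal) < r l) ∧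
    (Pairwise fun l l' =>
      Disjoint (Set.Ioc (w l : EReal) (r l)) (Set.Ioc (w l' : EReal) (r l'))) ∧
    R = ⋃ l, Set.Ioc ((w l : ℝ) : EReal) (r l)


/-- `b_N = σ(√(2 log N) - (log log N + log 4π)/(2√(2 log N)))`. -/
noncomputable def bNsigma (σ : ℝ) (N : ℕ) : ℝ :=
  σ * (Real.sqrt (2 * Real.log N) -
    (Real.log (Real.log N) + Real.log (4 * π)) / (2 * Real.sqrt (2 * Real.log N)))

/-- `a_N = σ²/b_N`. -/
noncomputable def aNsigma (σ : ℝ) (N : ℕ) : ℝ := σ ^ 2 / bNsigma σ N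

/-- `u_N(x) = a_N x + b_N`. -/
noncomputable def uNsigma (σ : ℝ) (N : ℕ) (x : ℝ) : ℝ := aNsigma σ N * x + bNsigma σ N

/-- The standard Gaussian upper tail `Φ̄(t) = P(𝒩(0,1) > t)`. -/
noncomputable def gaussTail (t : ℝ) : ℝ := (gaussianReal 0 1 (Set.Ioi t)).toReal

/-! Write `A_N = √(2 log N)`. Then `b_N ~ σ A_N`, and expanding the square of
`u_N(w)/σ = A_N - (log log N + log 4π)/(2 A_N) + σ w / b_N` shows that `N` times the standard
Gaussian density at `u_N(w)/σ` is `O(A_N)`. The two levels differ by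
`u_N(w)(σ - σ_N)/(σ σ_N) - m_N/σ_N`, which is `o(1/A_N)`: the first term is
`O(A_N (log N)^{-2(1+ε)(d-2)})` and `2(1+ε)(d-2) > 1` for `d ≥ 3`, the second is
`O(A_N^{-1-ε})`. Over a window of width `δ = o(1/A_N)` at height `t ~ A_N` the density changes
only by the factor `exp(tδ) → 1`, so the tails differ by `o(1/A_N) · O(A_N/N) = o(1/N)`. -/

open Topology

lemma gaussianPDFReal_zero_one (x : ℝ) :
    gaussianPDFReal 0 1 x = exp (-x ^ 2 / 2) / √(2 * π) := by
  simp [gaussianPDFReal, div_eq_inv_mul]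

lemma gaussianPDFReal_antitoneOn : AntitoneOn (gaussianPDFReal 0 1) (Ici 0) := by
  intro x (hx : 0 ≤ x) y _ hxy
  rw [gaussianPDFReal_zero_one, gaussianPDFReal_zero_one]
  gcongr

lemma gaussianPDFReal_sub_le (t δ : ℝ) :
    gaussianPDFReal 0 1 (t - δ) ≤ exp (t * δ) * gaussianPDFReal 0 1 t := by
  rw [gaussianPDFReal_zero_one, gaussianPDFReal_zero_one, ← mul_div_assoc, ← exp_add]
  gcongr
  nlinarith [sq_nonneg δ]

lemma gaussTail_antitone : Antitone gaussTail := fun _ _ hab =>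
  ENNReal.toReal_mono (measure_ne_top _ _) (measure_mono (Ioi_subset_Ioi hab))

lemma gaussTail_sub_le {a b : ℝ} (ha : 0 ≤ a) (hab : a ≤ b) :
    gaussTail a - gaussTail b ≤ (b - a) * gaussianPDFReal 0 1 a := by
  have hsplit : gaussTail a - gaussTail b = (gaussianReal 0 1).real (Ioc a b) := by
    rw [gaussTail, gaussTail, ← Ioc_union_Ioi_eq_Ioi hab,
      measure_union (by simp [disjoint_left]) measurableSet_Ioi,
      ENNReal.toReal_add (measure_ne_top _ _) (measure_ne_top _ _)]
    simp [measureReal_def]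
  rw [hsplit, measureReal_def, gaussianReal_apply_eq_integral 0 one_ne_zero,
    ENNReal.toReal_ofReal (integral_nonneg fun x => gaussianPDFReal_nonneg 0 1 x)]
  calc ∫ x in Ioc a b, gaussianPDFReal 0 1 x
      ≤ ∫ _ in Ioc a b, gaussianPDFReal 0 1 a :=
        setIntegral_mono_on (integrable_gaussianPDFReal 0 1).integrableOn
          (integrableOn_const measure_Ioc_lt_top.ne enorm_ne_top) measurableSet_Ioc
          fun x hx => gaussianPDFReal_antitoneOn ha (ha.trans hx.1.le) hx.1.le
    _ = (b - a) * gaussianPDFReal 0 1 a := by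
        simp [Real.volume_Ioc, measureReal_def, sub_nonneg.2 hab]

lemma abs_gaussTail_sub_le {s t δ : ℝ} (hst : |s - t| ≤ δ) (hδt : δ ≤ t) :
    |gaussTail t - gaussTail s| ≤ δ * exp (t * δ) * gaussianPDFReal 0 1 t := by
  have hδ : 0 ≤ δ := (abs_nonneg _).trans hst
  have h0 : 0 ≤ t - δ := sub_nonneg.2 hδt
  have hordered : ∀ a b, a ≤ b → t - δ ≤ a → b - a ≤ δ →
      gaussTail a - gaussTail b ≤ δ * exp (t * δ) * gaussianPDFReal 0 1 t := by
    intro a b hab ha hba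
    calc gaussTail a - gaussTail b ≤ (b - a) * gaussianPDFReal 0 1 a :=
          gaussTail_sub_le (h0.trans ha) hab
      _ ≤ δ * gaussianPDFReal 0 1 (t - δ) :=
          mul_le_mul hba (gaussianPDFReal_antitoneOn h0 (h0.trans ha) ha)
            (gaussianPDFReal_nonneg _ _ _) hδ
      _ ≤ δ * (exp (t * δ) * gaussianPDFReal 0 1 t) :=
          mul_le_mul_of_nonneg_left (gaussianPDFReal_sub_le t δ) hδ
      _ = δ * exp (t * δ) * gaussianPDFReal 0 1 t := (mul_assoc _ _ _).symm
  have hst' := abs_le.1 hst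
  rcases le_total s t with h | h
  · rw [abs_sub_comm, abs_of_nonneg (sub_nonneg.2 (gaussTail_antitone h))]
    exact hordered s t h (by linarith) (by linarith)
  · rw [abs_of_nonneg (sub_nonneg.2 (gaussTail_antitone h))]
    exact hordered t s h (by linarith) (by linarith)

lemma tendsto_nat_mul_abs_gaussTail_sub {A t s : ℕ → ℝ} {C : ℝ}
    (hA : Tendsto A atTop atTop) (ht : Tendsto (fun N => t N / A N) atTop (𝓝 1))
    (hst : Tendsto (fun N => A N * |s N - t N|) atTop (𝓝 0))
    (hpdf : ∀ᶠ N : ℕ in atTop, (N : ℝ) * gaussianPDFReal 0 1 (t N) ≤ C * A N) :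
    Tendsto (fun N : ℕ => (N : ℝ) * |gaussTail (t N) - gaussTail (s N)|) atTop (𝓝 0) := by
  have hδ : Tendsto (fun N => |s N - t N|) atTop (𝓝 0) := by
    refine (hst.div_atTop hA).congr' ?_
    filter_upwards [hA.eventually_gt_atTop 0] with N hN using mul_div_cancel_left₀ _ hN.ne'
  have ht_top : Tendsto t atTop atTop := hA.num one_pos ht
  have hbound : Tendsto (fun N => C * (A N * |s N - t N|) *
      exp (t N / A N * (A N * |s N - t N|))) atTop (𝓝 0) := by
    simpa using (hst.const_mul C).mul ((ht.mul hst).rexp)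
  refine squeeze_zero' (Eventually.of_forall fun N => by positivity) ?_ hbound
  filter_upwards [hpdf, hA.eventually_gt_atTop 0, hδ.eventually_le_const one_pos,
    ht_top.eventually_ge_atTop 1] with N hN hA0 hδ1 ht1
  calc (N : ℝ) * |gaussTail (t N) - gaussTail (s N)|
      ≤ N * (|s N - t N| * exp (t N * |s N - t N|) * gaussianPDFReal 0 1 (t N)) :=
        mul_le_mul_of_nonneg_left (abs_gaussTail_sub_le le_rfl (by linarith)) (Nat.cast_nonneg _)
    _ = |s N - t N| * exp (t N * |s N - t N|) * (N * gaussianPDFReal 0 1 (t N)) := by ring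
    _ ≤ |s N - t N| * exp (t N * |s N - t N|) * (C * A N) := by gcongr
    _ = C * (A N * |s N - t N|) * exp (t N / A N * (A N * |s N - t N|)) := by
        rw [show t N / A N * (A N * |s N - t N|) = t N * |s N - t N| by field_simp]
        ring

lemma tendsto_log_natCast_atTop : Tendsto (fun N : ℕ => log N) atTop atTop :=
  tendsto_log_atTop.comp tendsto_natCast_atTop_atTop

lemma tendsto_sqrt_two_log_atTop : Tendsto (fun N : ℕ => √(2 * log N)) atTop atTop :=
  tendsto_sqrt_atTop.comp (tendsto_log_natCast_atTop.const_mul_atTop two_pos)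

lemma tendsto_bNsigma_div_sqrt (σ : ℝ) :
    Tendsto (fun N => bNsigma σ N / √(2 * log N)) atTop (𝓝 σ) := by
  have hcorr : Tendsto (fun L : ℝ => (log L + log (4 * π)) / (4 * L)) atTop (𝓝 0) := by
    have := (tendsto_pow_log_div_mul_add_atTop 4 0 1 four_ne_zero).add
      ((tendsto_const_nhds (x := log (4 * π))).div_atTop (tendsto_id.const_mul_atTop four_pos))
    simpa [add_div] using this
  have := ((hcorr.comp tendsto_log_natCast_atTop).const_sub 1).const_mul σ
  rw [mul_sub, mul_zero, sub_zero, mul_one] at this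
  refine this.congr' ?_
  filter_upwards [tendsto_log_natCast_atTop.eventually_gt_atTop 0] with N hN
  have hA : √(2 * log N) ^ 2 = 2 * log N := sq_sqrt (by positivity)
  have hL : 4 * log N = 2 * √(2 * log N) ^ 2 := by rw [hA]; ring
  simp only [Function.comp, bNsigma]
  rw [hL]
  field_simp

lemma tendsto_bNsigma_atTop {σ : ℝ} (hσ : 0 < σ) : Tendsto (bNsigma σ) atTop atTop :=
  tendsto_sqrt_two_log_atTop.num hσ (tendsto_bNsigma_div_sqrt σ)

lemma tendsto_uNsigma_div_sqrt {σ : ℝ} (hσ : 0 < σ) (x : ℝ) :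
    Tendsto (fun N => uNsigma σ N x / √(2 * log N)) atTop (𝓝 σ) := by
  have ha : Tendsto (fun N => aNsigma σ N * x / √(2 * log N)) atTop (𝓝 0) :=
    (((tendsto_const_nhds (x := σ ^ 2 * x)).div_atTop (tendsto_bNsigma_atTop hσ)).div_atTop
      tendsto_sqrt_two_log_atTop).congr fun N => by rw [aNsigma, div_mul_eq_mul_div]
  simpa [uNsigma, add_div] using ha.add (tendsto_bNsigma_div_sqrt σ)

lemma eventually_nat_mul_gaussianPDFReal_le {σ : ℝ} (hσ : 0 < σ) (w : ℝ) :
    ∀ᶠ N : ℕ in atTop,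
      (N : ℝ) * gaussianPDFReal 0 1 (uNsigma σ N w / σ) ≤ exp (2 * |w|) * √(2 * log N) := by
  filter_upwards [eventually_gt_atTop 0, tendsto_log_natCast_atTop.eventually_gt_atTop 0,
    (tendsto_bNsigma_div_sqrt σ).eventually_const_le (half_lt_self hσ)] with N hN hL hbA
  set L := log (N : ℝ)
  set A := √(2 * L)
  set B := (log L + log (4 * π)) / (2 * A)
  have hA0 : 0 < A := sqrt_pos.2 (by positivity)
  have hA2 : A ^ 2 = 2 * L := sq_sqrt (by positivity)
  have hAB : 2 * A * B = log L + log (4 * π) := mul_div_cancel₀ _ (by positivity)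
  have hb : σ * A / 2 ≤ bNsigma σ N := by rwa [le_div_iff₀ hA0, div_mul_eq_mul_div] at hbA
  have hb0 : 0 < bNsigma σ N := lt_of_lt_of_le (by positivity) hb
  have ht : uNsigma σ N w / σ = A - B + σ * w / bNsigma σ N := by
    have hbσ : bNsigma σ N / σ = A - B := by
      rw [show bNsigma σ N = σ * (A - B) from rfl]
      field_simp
    rw [uNsigma, aNsigma, add_div, hbσ]
    field_simp
    ring
  have hw : |A * (σ * w / bNsigma σ N)| ≤ 2 * |w| := by
    rw [abs_mul, abs_div, abs_mul, abs_of_pos hA0, abs_of_pos hσ, abs_of_pos hb0,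
      mul_div_assoc', div_le_iff₀ hb0]
    nlinarith [abs_nonneg w]
  -- `(A - B + C)^2 ≥ A^2 - 2AB + 2AC`, and `A^2 - 2AB = 2 log N - log log N - log (4π)`.
  have hsq : 2 * L - (log L + log (4 * π)) - 4 * |w| ≤ (uNsigma σ N w / σ) ^ 2 := by
    rw [ht]
    nlinarith [sq_nonneg (σ * w / bNsigma σ N - B), (abs_le.1 hw).1]
  have hsqrt : exp (log (4 * π * L) / 2) = √(2 * L) * √(2 * π) := by
    rw [exp_half, exp_log (by positivity), ← sqrt_mul (by linarith)]
    ring_nf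
  calc (N : ℝ) * gaussianPDFReal 0 1 (uNsigma σ N w / σ)
      = exp L * (exp (-(uNsigma σ N w / σ) ^ 2 / 2) / √(2 * π)) := by
        rw [exp_log (Nat.cast_pos.2 hN), gaussianPDFReal_zero_one]
    _ ≤ exp L * (exp (log (4 * π * L) / 2 + 2 * |w| - L) / √(2 * π)) := by
        rw [log_mul (by positivity) hL.ne']
        gcongr
        linarith
    _ = exp (2 * |w|) * √(2 * L) := by
        rw [exp_sub, exp_add, hsqrt]
        field_simp

lemma tendsto_log_mul_sub_of_sq_sub_le {σ c r : ℝ} (hσ : 0 < σ) (hr : 1 < r)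
    {σN : ℕ → ℝ} (hσN0 : ∀ N, 0 ≤ σN N) (hσNσ : ∀ N, σN N ≤ σ)
    (hvar : ∀ᶠ N : ℕ in atTop, σ ^ 2 - σN N ^ 2 ≤ c * (log N) ^ (-r)) :
    Tendsto (fun N : ℕ => log N * (σ - σN N)) atTop (𝓝 0) := by
  have hbound : Tendsto (fun N : ℕ => c / σ * (log N) ^ (-(r - 1))) atTop (𝓝 0) := by
    simpa using ((tendsto_rpow_neg_atTop (sub_pos.2 hr)).comp tendsto_log_natCast_atTop).const_mul
      (c / σ)
  refine squeeze_zero'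
    (Eventually.of_forall fun N => mul_nonneg (log_natCast_nonneg N) (sub_nonneg.2 (hσNσ N)))
    ?_ hbound
  filter_upwards [hvar, tendsto_log_natCast_atTop.eventually_gt_atTop 0] with N hN hL
  have hdiff : σ - σN N ≤ c / σ * log N ^ (-r) := by
    rw [div_mul_eq_mul_div, le_div_iff₀ hσ]
    nlinarith [hσN0 N, hσNσ N]
  calc log N * (σ - σN N) ≤ log N * (c / σ * log N ^ (-r)) := by gcongr
    _ = c / σ * log N ^ (-(r - 1)) := by
        rw [show -(r - 1) = 1 + -r by ring, rpow_add hL, rpow_one]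
        ring

lemma tendsto_mul_of_abs_le_rpow {α : Type*} {l : Filter α} {A u m : α → ℝ} {a ε : ℝ}
    (ha : 0 < a) (hε : 0 < ε) (hA : Tendsto A l atTop)
    (hu : Tendsto (fun x => u x / A x) l (𝓝 a))
    (hm : ∀ᶠ x in l, |m x| ≤ u x ^ (-1 - ε)) :
    Tendsto (fun x => A x * m x) l (𝓝 0) := by
  have hu_top : Tendsto u l atTop := hA.num ha hu
  have hbound : Tendsto (fun x => (u x / A x)⁻¹ * u x ^ (-ε)) l (𝓝 0) := by
    simpa using (hu.inv₀ ha.ne').mul ((tendsto_rpow_neg_atTop hε).comp hu_top)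
  refine squeeze_zero_norm' ?_ hbound
  filter_upwards [hm, hu_top.eventually_gt_atTop 0, hA.eventually_gt_atTop 0] with x hmx hu0 hA0
  rw [norm_mul, norm_of_nonneg hA0.le, norm_eq_abs]
  calc A x * |m x| ≤ A x * u x ^ (-1 - ε) := by gcongr
    _ = (u x / A x)⁻¹ * u x ^ (-ε) := by
        rw [sub_eq_add_neg, rpow_add hu0, rpow_neg_one]
        field_simp

lemma tendsto_sqrt_two_log_mul_abs_sub {σ a : ℝ} (hσ : σ ≠ 0) {u σN m : ℕ → ℝ}
    (hσN : ∀ N, σN N ≠ 0) (hu : Tendsto (fun N : ℕ => u N / √(2 * log N)) atTop (𝓝 a))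
    (hlogσ : Tendsto (fun N : ℕ => log N * (σ - σN N)) atTop (𝓝 0))
    (hm : Tendsto (fun N : ℕ => √(2 * log N) * m N) atTop (𝓝 0)) :
    Tendsto (fun N : ℕ => √(2 * log N) * |(u N - m N) / σN N - u N / σ|) atTop (𝓝 0) := by
  have hσN_lim : Tendsto σN atTop (𝓝 σ) := by
    have h := (hlogσ.div_atTop tendsto_log_natCast_atTop).const_sub σ
    rw [sub_zero] at h
    refine h.congr' ?_
    filter_upwards [tendsto_log_natCast_atTop.eventually_gt_atTop 0] with N hN
    field_simp
    ring
  have hsplit : ∀ N : ℕ, √(2 * log N) * ((u N - m N) / σN N - u N / σ)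
      = u N / √(2 * log N) * (2 * (log N * (σ - σN N))) / (σ * σN N)
        - √(2 * log N) * m N / σN N := by
    intro N
    have hA : √(2 * log N) ^ 2 = 2 * log N := sq_sqrt (by positivity)
    have := hσN N
    rcases eq_or_ne (√(2 * log N)) 0 with h0 | h0
    · simp [h0]
    · field_simp
      linear_combination (u N * σ - u N * σN N) * hA
  have h := (((hu.mul (hlogσ.const_mul 2)).div (tendsto_const_nhds.mul hσN_lim)
    (mul_ne_zero hσ hσ)).sub (hm.div hσN_lim hσ)).abs
  simp only [mul_zero, zero_div, sub_zero, abs_zero] at h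
  exact h.congr fun N => by
    rw [Pi.div_apply, Pi.div_apply, ← hsplit, abs_mul, abs_of_nonneg (sqrt_nonneg _)]

theorem gaussian_tail_comparison_general
    (d : ℕ) (hd : 3 ≤ d) (σ w z ε c : ℝ)
    (hσ : 0 < σ) (hε : 0 < ε)
    (σN mN : ℕ → ℝ)
    (hσN : ∀ N, 0 < σN N ∧ σN N ≤ σ)
    (hvar : ∀ᶠ N : ℕ in atTop,
      σ ^ 2 - σN N ^ 2 ≤ c * (Real.log N) ^ (-(2 : ℝ) * (1 + ε) * ((d : ℝ) - 2)))
    (hm : ∀ᶠ N : ℕ in atTop, |mN N| ≤ (uNsigma σ N z) ^ (-(1 : ℝ) - ε)) :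
    Tendsto
      (fun N : ℕ => (N : ℝ) *
        |gaussTail (uNsigma σ N w / σ) - gaussTail ((uNsigma σ N w - mN N) / σN N)|)
      atTop (nhds 0) := by
  have hr : 1 < 2 * (1 + ε) * ((d : ℝ) - 2) := by
    have : (3 : ℝ) ≤ d := by exact_mod_cast hd
    nlinarith
  have hlogσ := tendsto_log_mul_sub_of_sq_sub_le hσ hr (fun N => (hσN N).1.le)
    (fun N => (hσN N).2) (by simpa only [neg_mul] using hvar)
  have hmN := tendsto_mul_of_abs_le_rpow hσ hε tendsto_sqrt_two_log_atTop
    (tendsto_uNsigma_div_sqrt hσ z) hm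
  have hu := tendsto_uNsigma_div_sqrt hσ w
  refine tendsto_nat_mul_abs_gaussTail_sub tendsto_sqrt_two_log_atTop ?_
    (tendsto_sqrt_two_log_mul_abs_sub hσ.ne' (fun N => (hσN N).1.ne') hu hlogσ hmN)
    (eventually_nat_mul_gaussianPDFReal_le hσ w)
  simpa [div_right_comm _ σ, hσ.ne'] using hu.div_const σ

/-- The core Gaussian comparison estimate for the Stein–Chen term `b₃`:
shifting the level by `m_N` and the standard deviation from `σ` to `σ_N` changes the Gaussian
tail at `u_N(w)` by `o(1/N)`. -/
theorem gaussian_tail_comparison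
    (d : ℕ) (hd : 3 ≤ d) (σ w z ε c : ℝ)
    (hσ : 0 < σ) (hε : 0 < ε) (hc : 0 < c)
    (σN mN : ℕ → ℝ)
    (hσN : ∀ N, 0 < σN N ∧ σN N ≤ σ)
    (hvar : ∀ᶠ N : ℕ in atTop,
      σ ^ 2 - σN N ^ 2 ≤ c * (Real.log N) ^ (-(2 : ℝ) * (1 + ε) * ((d : ℝ) - 2)))
    (hm : ∀ᶠ N : ℕ in atTop, |mN N| ≤ (uNsigma σ N z) ^ (-(1 : ℝ) - ε)) :
    Tendsto
      (fun N : ℕ => (N : ℝ) *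
        |gaussTail (uNsigma σ N w / σ) - gaussTail ((uNsigma σ N w - mN N) / σN N)|)
      atTop (nhds 0) :=
  gaussian_tail_comparison_general d hd σ w z ε c hσ hε σN mN hσN hvar hm
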